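/- arXiv:2203.06012 — 4 statements merged into one kernel-verified Lean document; each statement's English description precedes it below -/
import Mathlib

section
/- If K is a quasi-fibration of H of center v and radius r via γ, and r is strictly greater than the eccentricity of v (i.e., every vertex and arc of K lies on a dipath of length at most r to v, so B⁻_K(v,r) = K), then K is a fibration of H via an extension of γ. In particular, if r exceeds the diameter of K, then K is a fibration of H. -/
/-!
Since `r` exceeds the eccentricity `e` of `v`, the in-ball `B⁻_K(v,r)` is all of `K`, so
`γ` itself is a homomorphism `K → H`. Unique lifting is local: through the isomorphism `δ`,
a vertex `u` of `K` corresponds to a vertex of `G` at distance `≤ e < r` from `w`, and every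
arc of `G` ending there lies in `B⁻_G(w,r)`, so the unique `φ`-lifts in `G` transport back to `K`.
-/

/-- A digraph with possibly multiple arcs and self-loops. -/
structure MDigraph where
  V : Type
  A : Type
  src : A → V
  tgt : A → V

/-- A homomorphism of digraphs: maps vertices to vertices and arcs to arcs,
preserving sources and targets. -/
structure DHom (D₁ D₂ : MDigraph) where
  onV : D₁.V → D₂.V
  onA : D₁.A → D₂.A
  map_src : ∀ a, onV (D₁.src a) = D₂.src (onA a)
  map_tgt : ∀ a, onV (D₁.tgt a) = D₂.tgt (onA a)

/-- Composition of digraph homomorphisms. -/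
def DHom.comp {D₁ D₂ D₃ : MDigraph} (g : DHom D₂ D₃) (f : DHom D₁ D₂) : DHom D₁ D₃ where
  onV := g.onV ∘ f.onV
  onA := g.onA ∘ f.onA
  map_src := by intro a; simp [Function.comp, f.map_src, g.map_src]
  map_tgt := by intro a; simp [Function.comp, f.map_tgt, g.map_tgt]

/-- `φ : D₁ → D₂` is a fibration if every arc of `D₂` lifts uniquely at every
preimage of its target. -/
def IsFibration {D₁ D₂ : MDigraph} (φ : DHom D₁ D₂) : Prop :=
  ∀ (a : D₂.A) (v : D₁.V), φ.onV v = D₂.tgt a →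
    ∃! a' : D₁.A, φ.onA a' = a ∧ D₁.tgt a' = v

/-- `ReachLE D k w v` : there is a dipath of length at most `k` from `w` to `v`. -/
def ReachLE (D : MDigraph) : ℕ → D.V → D.V → Prop
  | 0, w, v => w = v
  | n+1, w, v => w = v ∨ ∃ a : D.A, D.src a = w ∧ ReachLE D n (D.tgt a) v

theorem ReachLE.mono {D : MDigraph} : ∀ {k r : ℕ}, k ≤ r → ∀ {w v : D.V},
    ReachLE D k w v → ReachLE D r w v := by
  intro k
  induction k with
  | zero =>
    intro r _ w v h
    cases r with
    | zero => exact h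
    | succ n => exact Or.inl h
  | succ n ih =>
    intro r hle w v h
    cases r with
    | zero => omega
    | succ m =>
      rcases h with h | ⟨a, ha, hr⟩
      · exact Or.inl h
      · exact Or.inr ⟨a, ha, ih (by omega) hr⟩

/-- Vertices of the in-ball of center `v` and radius `r`. -/
def inBallV (D : MDigraph) (v : D.V) (r : ℕ) : Set D.V := {w | ReachLE D r w v}

/-- Arcs of the in-ball of center `v` and radius `r`: arcs lying on a dipath of
length at most `r` ending at `v`. -/
def inBallA (D : MDigraph) (v : D.V) (r : ℕ) : Set D.A :=
  {a | ∃ k, k + 1 ≤ r ∧ ReachLE D k (D.tgt a) v}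

/-- The in-ball `B⁻_D(v,r)` as a digraph. -/
def inBall (D : MDigraph) (v : D.V) (r : ℕ) : MDigraph where
  V := {w // w ∈ inBallV D v r}
  A := {a // a ∈ inBallA D v r}
  src a := ⟨D.src a.val, by
    obtain ⟨k, hk, hr⟩ := a.property
    exact ReachLE.mono hk (Or.inr ⟨a.val, rfl, hr⟩)⟩
  tgt a := ⟨D.tgt a.val, by
    obtain ⟨k, hk, hr⟩ := a.property
    exact ReachLE.mono (by omega) hr⟩

theorem center_mem (D : MDigraph) (v : D.V) (r : ℕ) : v ∈ inBallV D v r :=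
  ReachLE.mono (Nat.zero_le r) (show ReachLE D 0 v v from rfl)

/-- The inclusion homomorphism of the in-ball into the digraph. -/
def ballIncl (D : MDigraph) (v : D.V) (r : ℕ) : DHom (inBall D v r) D where
  onV := Subtype.val
  onA := Subtype.val
  map_src := fun _ => rfl
  map_tgt := fun _ => rfl

/-- `K` is a quasi-fibration of `H` of center `v` and radius `r` via
`γ : B⁻_K(v,r) → H`: there are a digraph `G`, a fibration `φ : G → H`, a vertex
`w` of `G` and an isomorphism `δ : B⁻_K(v,r) → B⁻_G(w,r)` sending `v` to `w`
with `γ = φ ∘ δ`. -/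
def IsQuasiFibration (K H : MDigraph) (v : K.V) (r : ℕ)
    (γ : DHom (inBall K v r) H) : Prop :=
  ∃ (G : MDigraph) (φ : DHom G H) (w : G.V) (δ : DHom (inBall K v r) (inBall G w r)),
    IsFibration φ ∧ Function.Bijective δ.onV ∧ Function.Bijective δ.onA ∧
    δ.onV ⟨v, center_mem K v r⟩ = ⟨w, center_mem G w r⟩ ∧
    γ = (φ.comp (ballIncl G w r)).comp δ

def LiftsUniquelyAt {D H : MDigraph} (φ : DHom D H) (x : D.V) : Prop :=
  ∀ a : H.A, φ.onV x = H.tgt a → ∃! a' : D.A, φ.onA a' = a ∧ D.tgt a' = x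

theorem ReachLE.map {D₁ D₂ : MDigraph} (f : DHom D₁ D₂) :
    ∀ {k : ℕ} {w v : D₁.V}, ReachLE D₁ k w v → ReachLE D₂ k (f.onV w) (f.onV v)
  | 0, _, _, h => congrArg f.onV h
  | _ + 1, _, _, .inl h => .inl (congrArg f.onV h)
  | _ + 1, _, _, .inr ⟨a, ha, h⟩ =>
    .inr ⟨f.onA a, by rw [← f.map_src, ha], by rw [← f.map_tgt]; exact ReachLE.map f h⟩

theorem LiftsUniquelyAt.comp {D₁ D₂ H : MDigraph} {ψ : DHom D₂ H} {δ : DHom D₁ D₂}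
    (hV : Function.Injective δ.onV) (hA : Function.Bijective δ.onA) {x : D₁.V}
    (h : LiftsUniquelyAt ψ (δ.onV x)) : LiftsUniquelyAt (ψ.comp δ) x := by
  intro a ha
  obtain ⟨b, ⟨hb, hbx⟩, huniq⟩ := h a ha
  obtain ⟨b, rfl⟩ := hA.2 b
  refine ⟨b, ⟨hb, hV ((δ.map_tgt b).trans hbx)⟩, fun c ⟨hc, hcx⟩ => hA.1 ?_⟩
  exact huniq (δ.onA c) ⟨hc, (δ.map_tgt c).symm.trans (congrArg δ.onV hcx)⟩

/-- An arc whose target is at distance `k < r` from `w` lies in `B⁻(w,r)`. -/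
theorem IsFibration.liftsUniquelyAt_inBall {G H : MDigraph} {φ : DHom G H} (hφ : IsFibration φ)
    {w : G.V} {k r : ℕ} (hkr : k + 1 ≤ r) {x : (inBall G w r).V} (hx : ReachLE G k x.val w) :
    LiftsUniquelyAt (φ.comp (ballIncl G w r)) x := by
  intro a ha
  obtain ⟨b, ⟨hb, hbx⟩, huniq⟩ := hφ a x.val ha
  refine ⟨⟨b, k, hkr, hbx ▸ hx⟩, ⟨hb, Subtype.ext hbx⟩, fun c ⟨hc, hcx⟩ => Subtype.ext ?_⟩
  exact huniq c.val ⟨hc, congrArg Subtype.val hcx⟩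

section Covering

variable (D : MDigraph) (v : D.V) (r : ℕ) (hV : ∀ u, u ∈ inBallV D v r)
  (hA : ∀ a, a ∈ inBallA D v r)

def DHom.toInBall : DHom D (inBall D v r) where
  onV u := ⟨u, hV u⟩
  onA a := ⟨a, hA a⟩
  map_src _ := rfl
  map_tgt _ := rfl

theorem DHom.toInBall_onV_injective : Function.Injective (DHom.toInBall D v r hV hA).onV :=
  fun _ _ h => congrArg Subtype.val h

theorem DHom.toInBall_onA_bijective : Function.Bijective (DHom.toInBall D v r hV hA).onA :=
  ⟨fun _ _ h => congrArg Subtype.val h, fun a => ⟨a.val, rfl⟩⟩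

end Covering

/-- a quasi-fibration of radius strictly greater than the eccentricity
of its center (so that `B⁻_K(v,r) = K`) extends to a fibration. In particular this
holds when `r` exceeds the diameter of `K`. -/
theorem quasiFibration_large_radius_isFibration (K H : MDigraph) (v : K.V) (r : ℕ)
    (γ : DHom (inBall K v r) H) (hq : IsQuasiFibration K H v r γ)
    (hecc : ∃ e, e < r ∧ ∀ w : K.V, ReachLE K e w v) :
    ∃ φ : DHom K H, IsFibration φ ∧
      (∀ x : (inBall K v r).V, φ.onV x.val = γ.onV x) ∧
      (∀ a : (inBall K v r).A, φ.onA a.val = γ.onA a) := by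
  obtain ⟨G, φ, w, δ, hφ, hδV, hδA, hδw, rfl⟩ := hq
  obtain ⟨e, her, hreach⟩ := hecc
  have hV : ∀ u, u ∈ inBallV K v r := fun u => ReachLE.mono her.le (hreach u)
  have hA : ∀ a, a ∈ inBallA K v r := fun a => ⟨e, her, hreach _⟩
  let ι := DHom.toInBall K v r hV hA
  refine ⟨((φ.comp (ballIncl G w r)).comp δ).comp ι, fun a u => ?_, fun _ => rfl, fun _ => rfl⟩
  have hnear : ReachLE G e (δ.onV (ι.onV u)).val w := by
    simpa only [ι, DHom.toInBall, hδw, ballIncl] using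
      (((hreach u).map ι).map δ).map (ballIncl G w r)
  have hlift : LiftsUniquelyAt _ u :=
    ((hφ.liftsUniquelyAt_inBall her hnear).comp hδV.1 hδA).comp
      (DHom.toInBall_onV_injective K v r hV hA) (DHom.toInBall_onA_bijective K v r hV hA)
  exact hlift a
end

section
/- Lifting Lemma: if D' is a fibration of D via φ, then for any execution ρ of a deterministic cellular-model algorithm A on D (a sequence of global states where at each step a set of activated vertices simultaneously update their state as a function of their own state and the multiset of states of their in-neighbors), the sequence ρ' on D' obtained by giving each vertex v of D' at each step the state of φ(v) in ρ is a valid execution of A on D'. In particular, at every step the state of v in ρ' equals the state of φ(v) in ρ. -/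
/-- The multiset of states of the in-neighbors of `v` (one per incoming arc). -/
noncomputable def inNbhd {Λ : Type} (D : MDigraph) [Fintype D.A] (x : D.V → Λ) (v : D.V) :
    Multiset Λ :=
  letI : DecidablePred (fun a : D.A => D.tgt a = v) := Classical.decPred _
  ((Finset.univ : Finset D.A).filter (fun a => D.tgt a = v)).val.map (fun a => x (D.src a))

/-- `x` is an execution of the algorithm `δ` under activation sets `Act`:
at each step, every activated vertex atomically replaces its state by
`δ(current state, multiset of in-neighbor states)` and every other vertex keeps its state. -/
def IsExecution {Λ : Type} (D : MDigraph) [Fintype D.A] (δ : Λ → Multiset Λ → Λ)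
    (Act : ℕ → Set D.V) (x : ℕ → D.V → Λ) : Prop :=
  ∀ t v, (v ∈ Act (t + 1) → x (t + 1) v = δ (x t v) (inNbhd D (x t) v)) ∧
         (v ∉ Act (t + 1) → x (t + 1) v = x t v)

/-- The synchronous run of the algorithm `δ` from initial states `x0`. -/
noncomputable def syncRun {Λ : Type} (D : MDigraph) [Fintype D.A]
    (δ : Λ → Multiset Λ → Λ) (x0 : D.V → Λ) : ℕ → D.V → Λ
  | 0 => x0
  | t + 1 => fun v => δ (syncRun D δ x0 t v) (inNbhd D (syncRun D δ x0 t) v)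

/-- Lifting Lemma: if `φ : D' → D` is a fibration, then any execution
`x` on `D` lifts to the execution on `D'` obtained by giving each vertex `v` the
state of `φ(v)`; in particular at every step the state of `v` equals the state of
`φ(v)`. -/
theorem lifting_lemma {Λ : Type} (D' D : MDigraph) [Fintype D'.A] [Fintype D.A]
    (φ : DHom D' D) (hφ : IsFibration φ) (δ : Λ → Multiset Λ → Λ)
    (Act : ℕ → Set D.V) (x : ℕ → D.V → Λ) (hx : IsExecution D δ Act x) :
    IsExecution D' δ (fun t => φ.onV ⁻¹' Act t) (fun t v => x t (φ.onV v)) ∧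
    ∀ (t : ℕ) (v : D'.V), (fun t v => x t (φ.onV v)) t v = x t (φ.onV v) := by
  classical
  have key : ∀ (y : D.V → Λ) (v : D'.V),
      inNbhd D' (fun u => y (φ.onV u)) v = inNbhd D y (φ.onV v) := by
    intro y v
    unfold inNbhd
    set s' := (Finset.univ : Finset D'.A).filter (fun a => D'.tgt a = v) with hs'
    set s := (Finset.univ : Finset D.A).filter (fun a => D.tgt a = φ.onV v) with hs
    have hmem' : ∀ a : D'.A, a ∈ s' ↔ D'.tgt a = v := by
      intro a; simp [hs']
    have hmem : ∀ a : D.A, a ∈ s ↔ D.tgt a = φ.onV v := by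
      intro a; simp [hs]
    have hmapeq : s'.val.map φ.onA = s.val := by
      have hnodup : (s'.val.map φ.onA).Nodup := by
        refine Multiset.Nodup.map_on ?_ s'.nodup
        intro a₁ h₁ a₂ h₂ heq
        have ht₁ : D'.tgt a₁ = v := (hmem' a₁).1 h₁
        have ht₂ : D'.tgt a₂ = v := (hmem' a₂).1 h₂
        have htgt : φ.onV v = D.tgt (φ.onA a₁) := by
          rw [← ht₁, φ.map_tgt]
        obtain ⟨a', -, huniq⟩ := hφ (φ.onA a₁) v htgt
        have e1 := huniq a₁ ⟨rfl, ht₁⟩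
        have e2 := huniq a₂ ⟨heq.symm, ht₂⟩
        rw [e1, e2]
      refine Multiset.Nodup.ext hnodup s.nodup |>.mpr ?_
      intro a
      simp only [Multiset.mem_map, ← Finset.mem_def]
      constructor
      · rintro ⟨a', ha', rfl⟩
        rw [hmem]
        rw [← φ.map_tgt, (hmem' a').1 ha']
      · intro ha
        obtain ⟨a', ⟨hφa, hta⟩, -⟩ := hφ a v ((hmem a).1 ha).symm
        exact ⟨a', (hmem' a').2 hta, hφa⟩
    calc s'.val.map (fun a => y (φ.onV (D'.src a)))
        = s'.val.map (fun a => y (D.src (φ.onA a))) := by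
          apply Multiset.map_congr rfl
          intro a _
          rw [φ.map_src]
      _ = (s'.val.map φ.onA).map (fun a => y (D.src a)) := by
          rw [Multiset.map_map]; rfl
      _ = s.val.map (fun a => y (D.src a)) := by rw [hmapeq]
  refine ⟨?_, fun t v => rfl⟩
  intro t v
  constructor
  · intro h
    have h1 := (hx t (φ.onV v)).1 h
    simp only []
    rw [h1, key]
  · intro h
    simp only []
    exact (hx t (φ.onV v)).2 h
end

section
/- Quasi-Lifting Lemma (synchronous case): suppose K is a quasi-fibration of H of center v and radius r via γ. For a deterministic synchronous cellular algorithm (every vertex updates at every round using its own state and the multiset of in-neighbor states), if both K and H start in initial states compatible via γ (each vertex x of B⁻_K(v,r) has the same initial state as γ(x)), then for every round t ≤ r, the state of v in K after t rounds equals the state of γ(v) in H after t rounds. -/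
/-! The two inputs of the argument are that an in-ball is a faithful copy of the digraph around
every vertex strictly inside it, and that a fibration, and hence `γ` at such a vertex, maps the
in-arcs of a vertex bijectively onto those of its image. A vertex at depth `k` therefore has the
same in-neighbourhood as its image under `γ`, and its state after `t` rounds agrees with that of
its image as long as `k + t ≤ r`, by induction on `t`. -/

theorem DHom.reachLE {D₁ D₂ : MDigraph} (f : DHom D₁ D₂) :
    ∀ {k : ℕ} {x y : D₁.V}, ReachLE D₁ k x y → ReachLE D₂ k (f.onV x) (f.onV y)
  | 0, _, _, h => congrArg f.onV h
  | _ + 1, _, _, .inl h => .inl (congrArg f.onV h)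
  | _ + 1, _, _, .inr ⟨a, hsrc, hr⟩ =>
    .inr ⟨f.onA a, by rw [← f.map_src, hsrc], by rw [← f.map_tgt]; exact f.reachLE hr⟩

def DHom.inArcs {D₁ D₂ : MDigraph} (f : DHom D₁ D₂) (x : D₁.V) :
    {a : D₁.A // D₁.tgt a = x} → {b : D₂.A // D₂.tgt b = f.onV x} :=
  fun a => ⟨f.onA a.1, by rw [← f.map_tgt, a.2]⟩

theorem DHom.inArcs_comp {D₁ D₂ D₃ : MDigraph} (g : DHom D₂ D₃) (f : DHom D₁ D₂) (x : D₁.V) :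
    (g.comp f).inArcs x = g.inArcs (f.onV x) ∘ f.inArcs x :=
  rfl

theorem IsFibration.bijective_inArcs {D₁ D₂ : MDigraph} {φ : DHom D₁ D₂} (hφ : IsFibration φ)
    (x : D₁.V) : Function.Bijective (φ.inArcs x) := by
  refine ⟨fun a a' h => Subtype.ext ?_, fun b => ?_⟩
  · have hb := congrArg Subtype.val h
    exact (hφ (φ.onA a.1) x (by rw [← φ.map_tgt, a.2])).unique ⟨rfl, a.2⟩ ⟨hb.symm, a'.2⟩
  · obtain ⟨a, ⟨ha, htgt⟩, -⟩ := hφ b.1 x b.2.symm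
    exact ⟨⟨a, htgt⟩, Subtype.ext ha⟩

theorem DHom.bijective_inArcs_of_bijective {D₁ D₂ : MDigraph} {f : DHom D₁ D₂}
    (hV : Function.Injective f.onV) (hA : Function.Bijective f.onA) (x : D₁.V) :
    Function.Bijective (f.inArcs x) := by
  refine ⟨fun a a' h => Subtype.ext (hA.1 (congrArg Subtype.val h)), fun b => ?_⟩
  obtain ⟨a, ha⟩ := hA.2 b.1
  exact ⟨⟨a, hV (by rw [f.map_tgt, ha, b.2])⟩, Subtype.ext ha⟩

theorem bijective_inArcs_ballIncl {D : MDigraph} {v : D.V} {r k : ℕ} (hk : k < r)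
    {x : (inBall D v r).V} (hx : ReachLE (inBall D v r) k x ⟨v, center_mem D v r⟩) :
    Function.Bijective ((ballIncl D v r).inArcs x) := by
  refine ⟨fun a a' h => Subtype.ext (Subtype.ext (congrArg Subtype.val h :)), fun b => ?_⟩
  have hreach : ReachLE D k (D.tgt b.1) v := by rw [b.2]; exact (ballIncl D v r).reachLE hx
  exact ⟨⟨⟨b.1, k, hk, hreach⟩, Subtype.ext b.2⟩, rfl⟩

theorem IsQuasiFibration.bijective_inArcs {K H : MDigraph} {v : K.V} {r k : ℕ}
    {γ : DHom (inBall K v r) H} (hq : IsQuasiFibration K H v r γ) (hk : k < r)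
    {x : (inBall K v r).V} (hx : ReachLE (inBall K v r) k x ⟨v, center_mem K v r⟩) :
    Function.Bijective (γ.inArcs x) := by
  obtain ⟨G, φ, w, ι, hφ, hιV, hιA, hcen, rfl⟩ := hq
  have hιx : ReachLE (inBall G w r) k (ι.onV x) ⟨w, center_mem G w r⟩ := hcen ▸ ι.reachLE hx
  rw [DHom.inArcs_comp, DHom.inArcs_comp]
  exact (hφ.bijective_inArcs _ |>.comp (bijective_inArcs_ballIncl hk hιx)).comp
    (DHom.bijective_inArcs_of_bijective hιV.1 hιA x)

theorem inNbhd_eq_map_univ {Λ : Type} (D : MDigraph) [Fintype D.A] (s : D.V → Λ) (u : D.V)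
    [Fintype {a : D.A // D.tgt a = u}] :
    inNbhd D s u = (Finset.univ : Finset {a : D.A // D.tgt a = u}).val.map (s ∘ D.src ∘ (↑)) := by
  classical
  show ((Finset.univ : Finset D.A).filter (fun a => D.tgt a = u)).val.map (s ∘ D.src) = _
  rw [← Finset.subtype_map (fun a : D.A => D.tgt a = u), Finset.subtype_univ, Finset.map_val,
    Multiset.map_map]
  congr 1

theorem inNbhd_congr_of_equiv {Λ : Type} {D₁ D₂ : MDigraph} [Fintype D₁.A] [Fintype D₂.A]
    {s₁ : D₁.V → Λ} {s₂ : D₂.V → Λ} {u₁ : D₁.V} {u₂ : D₂.V}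
    (e : {a : D₁.A // D₁.tgt a = u₁} ≃ {b : D₂.A // D₂.tgt b = u₂})
    (h : ∀ a, s₁ (D₁.src a.1) = s₂ (D₂.src (e a).1)) :
    inNbhd D₁ s₁ u₁ = inNbhd D₂ s₂ u₂ := by
  classical
  rw [inNbhd_eq_map_univ, inNbhd_eq_map_univ, ← Multiset.map_univ_val_equiv e, Multiset.map_map]
  exact Multiset.map_congr rfl fun a _ => h a

theorem inNbhd_eq_of_bijective_inArcs {Λ : Type} {D₀ D₁ D₂ : MDigraph} [Fintype D₁.A]
    [Fintype D₂.A] {f : DHom D₀ D₁} {g : DHom D₀ D₂} {x : D₀.V}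
    (hf : Function.Bijective (f.inArcs x)) (hg : Function.Bijective (g.inArcs x))
    {s₁ : D₁.V → Λ} {s₂ : D₂.V → Λ}
    (h : ∀ a, D₀.tgt a = x → s₁ (f.onV (D₀.src a)) = s₂ (g.onV (D₀.src a))) :
    inNbhd D₁ s₁ (f.onV x) = inNbhd D₂ s₂ (g.onV x) := by
  refine inNbhd_congr_of_equiv ((Equiv.ofBijective _ hf).symm.trans (Equiv.ofBijective _ hg))
    fun b => ?_
  obtain ⟨a, rfl⟩ := hf.2 b
  simp only [Equiv.trans_apply, Equiv.ofBijective_symm_apply_apply, Equiv.ofBijective_apply]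
  simpa only [DHom.inArcs, ← f.map_src, ← g.map_src] using h a.1 a.2

theorem syncRun_eq_of_isQuasiFibration {Λ : Type} {K H : MDigraph} [Fintype K.A] [Fintype H.A]
    {v : K.V} {r : ℕ} {γ : DHom (inBall K v r) H} (hq : IsQuasiFibration K H v r γ)
    (δ : Λ → Multiset Λ → Λ) {xK : K.V → Λ} {xH : H.V → Λ}
    (hinit : ∀ x : (inBall K v r).V, xK x.val = xH (γ.onV x)) :
    ∀ (t k : ℕ) (x : (inBall K v r).V), k + t ≤ r →
      ReachLE (inBall K v r) k x ⟨v, center_mem K v r⟩ →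
      syncRun K δ xK t x.val = syncRun H δ xH t (γ.onV x)
  | 0, _, x, _, _ => hinit x
  | t + 1, k, x, hkt, hx => by
    have hk : k < r := by omega
    have hnbhd : inNbhd K (syncRun K δ xK t) ((ballIncl K v r).onV x) =
        inNbhd H (syncRun H δ xH t) (γ.onV x) :=
      inNbhd_eq_of_bijective_inArcs (bijective_inArcs_ballIncl hk hx) (hq.bijective_inArcs hk hx)
        fun a ha => syncRun_eq_of_isQuasiFibration hq δ hinit t (k + 1) _ (by omega)
          (.inr ⟨a, rfl, ha ▸ hx⟩)
    show δ _ (inNbhd K _ x.val) = δ _ _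
    rw [syncRun_eq_of_isQuasiFibration hq δ hinit t k x (by omega) hx]
    exact congrArg _ hnbhd

/-- Quasi-Lifting Lemma, synchronous case: if `K` is a
quasi-fibration of `H` of center `v` and radius `r` via `γ`, and the initial
states are compatible via `γ` on the in-ball, then for every round `t ≤ r` the
state of `v` in `K` equals the state of `γ(v)` in `H`. -/
theorem quasi_lifting_lemma {Λ : Type} (K H : MDigraph) [Fintype K.A] [Fintype H.A]
    (v : K.V) (r : ℕ) (γ : DHom (inBall K v r) H) (hq : IsQuasiFibration K H v r γ)
    (δ : Λ → Multiset Λ → Λ) (xK : K.V → Λ) (xH : H.V → Λ)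
    (hinit : ∀ x : (inBall K v r).V, xK x.val = xH (γ.onV x)) :
    ∀ t ≤ r, syncRun K δ xK t v = syncRun H δ xH t (γ.onV ⟨v, center_mem K v r⟩) := fun t ht =>
  syncRun_eq_of_isQuasiFibration hq δ hinit t 0 _ (by omega) rfl
end

section
/- If a vertex v₀ in the snap-stabilizing Mazurkiewicz algorithm applies the Output rule after being causally influenced by the set P of requesting nodes, and if f, r are r-lifting closed with f an output function, then out(v₀) = f(G, v₀), where G is the actual network: formally, given (1) G is a quasi-fibration of G_{M(v₀)} of center v₀ and radius a(v₀), (2) K(v₀) ∈ F is a quasi-fibration of G_{M(v₀)} of radius a(v₀) and center w(v₀), (3) a(v₀) ≥ r(K(v₀), w(v₀)), and (4) f, r are r-lifting closed, conclude f(K(v₀), w(v₀)) = f(G_{M(v₀)}, n(v₀)) = f(G, v₀). -/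
/-- `f` is `r`-lifting closed: whenever `K` is a quasi-fibration of `H` of center
`v` and radius `k` via `γ` with `k ≥ min{r(K,v), r(H,γ(v))}`, then
`f(K,v) = f(H,γ(v))`. -/
def RLiftingClosed {Λ : Type} (f : (D : MDigraph) → D.V → Option Λ)
    (r : (D : MDigraph) → D.V → ℕ∞) : Prop :=
  ∀ (K H : MDigraph) (v : K.V) (k : ℕ) (γ : DHom (inBall K v k) H),
    IsQuasiFibration K H v k γ →
    min (r K v) (r H (γ.onV ⟨v, center_mem K v k⟩)) ≤ (k : ℕ∞) →
    f K v = f H (γ.onV ⟨v, center_mem K v k⟩)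

/-- `r` is `r`-lifting closed (same condition, for `r` itself). -/
def RLiftingClosedR (r : (D : MDigraph) → D.V → ℕ∞) : Prop :=
  ∀ (K H : MDigraph) (v : K.V) (k : ℕ) (γ : DHom (inBall K v k) H),
    IsQuasiFibration K H v k γ →
    min (r K v) (r H (γ.onV ⟨v, center_mem K v k⟩)) ≤ (k : ℕ∞) →
    r K v = r H (γ.onV ⟨v, center_mem K v k⟩)

/-- chaining of `r`-lifting closedness at an Output-rule application:
given (1) the network `G` is a quasi-fibration of the reconstructed graph `GM` of
center `v₀` and radius `a` with `γ₁(v₀) = n₀`, (2) `K` is a quasi-fibration of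
`GM` of center `w₀` and radius `a` with `γ₂(w₀) = n₀`, (3) `a ≥ r(K,w₀)`, and
(4) `f`, `r` are `r`-lifting closed, then
`f(K,w₀) = f(GM,n₀)` and `f(GM,n₀) = f(G,v₀)` (so `out(v₀) = f(G,v₀)`). -/
theorem output_rule_correct {Λ : Type}
    (f : (D : MDigraph) → D.V → Option Λ) (r : (D : MDigraph) → D.V → ℕ∞)
    (hf : RLiftingClosed f r) (hr : RLiftingClosedR r)
    (G GM K : MDigraph) (v₀ : G.V) (w₀ : K.V) (n₀ : GM.V) (a : ℕ)
    (γ₁ : DHom (inBall G v₀ a) GM) (γ₂ : DHom (inBall K w₀ a) GM)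
    (h1 : IsQuasiFibration G GM v₀ a γ₁)
    (h1c : γ₁.onV ⟨v₀, center_mem G v₀ a⟩ = n₀)
    (h2 : IsQuasiFibration K GM w₀ a γ₂)
    (h2c : γ₂.onV ⟨w₀, center_mem K w₀ a⟩ = n₀)
    (h3 : r K w₀ ≤ (a : ℕ∞)) :
    f K w₀ = f GM n₀ ∧ f GM n₀ = f G v₀ := by
  have hmin2 : min (r K w₀) (r GM (γ₂.onV ⟨w₀, center_mem K w₀ a⟩)) ≤ (a : ℕ∞) := by
    rw [h2c]; exact le_trans (min_le_left _ _) h3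
  have hreq : r K w₀ = r GM n₀ := by
    have := hr K GM w₀ a γ₂ h2 hmin2; rwa [h2c] at this
  have hfK : f K w₀ = f GM n₀ := by
    have := hf K GM w₀ a γ₂ h2 hmin2; rwa [h2c] at this
  have hmin1 : min (r G v₀) (r GM (γ₁.onV ⟨v₀, center_mem G v₀ a⟩)) ≤ (a : ℕ∞) := by
    rw [h1c, ← hreq]; exact le_trans (min_le_right _ _) h3
  have hfG : f G v₀ = f GM n₀ := by
    have := hf G GM v₀ a γ₁ h1 hmin1; rwa [h1c] at this
  exact ⟨hfK, hfG.symm⟩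
end
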